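/- arXiv:2504.15675 — 4 statements merged into one kernel-verified Lean document; each statement's English description precedes it below -/
import Mathlib

section
/- Let λ be a cardinal with 2^{<λ} = λ, and suppose A ⊆ WO_λ satisfies sup{ot(<_x) : x ∈ A} = λ⁺ (i.e., the order types of well-orders coded by elements of A are unbounded in λ⁺). Then A is not a λ-analytic subset of the space λ→2. -/
universe u
open Cardinal

/-- The canonical type of order type `λ` representing the cardinal `λ` as a set of "ordinals". -/
abbrev T (lam : Cardinal.{u}) : Type u := lam.ord.ToType

/-- The binary relation on `λ` coded by `z : λ → 2` via the pairing bijection `pair`: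
`(a, b) ∈ E_z` iff `z ⟨a,b⟩ = 0` (we use `false` for `0`). -/
def Ez {lam : Cardinal.{u}} (pair : T lam × T lam ≃ T lam) (z : T lam → Bool)
    (a b : T lam) : Prop := z (pair (a, b)) = false

/-- `z` codes a well-order of order type `α`: the relation `E_z` only relates elements of a set
`S` (its field), and restricted to `S` it is a well-order of order type `α`. -/
def codesWO {lam : Cardinal.{u}} (pair : T lam × T lam ≃ T lam) (z : T lam → Bool)
    (α : Ordinal.{u}) : Prop :=
  ∃ S : Set (T lam), (∀ a b : T lam, Ez pair z a b → a ∈ S ∧ b ∈ S) ∧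
    ∃ hwo : IsWellOrder S (fun a b : S => Ez pair z a.1 b.1),
      @Ordinal.type S (fun a b : S => Ez pair z a.1 b.1) hwo = α

/-- The bounded topology on the generalised Cantor space `λ → 2`: basic open sets are
determined by fixing the values on a bounded (initial) segment of `λ`. -/
def btop (lam : Cardinal.{u}) : TopologicalSpace (T lam → Bool) :=
  TopologicalSpace.generateFrom
    {V | ∃ (b : T lam) (s : T lam → Bool), V = {x | ∀ a : T lam, a < b → x a = s a}}

/-- `A` is a λ-analytic subset of `λ → 2`: it is a continuous image of a λ-Polish space,
i.e. of a completely metrizable space of weight `≤ λ`. -/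
def IsLamAnalytic (lam : Cardinal.{u}) (A : Set (T lam → Bool)) : Prop :=
  ∃ (Y : Type u) (tY : TopologicalSpace Y) (m : MetricSpace Y),
    m.toUniformSpace.toTopologicalSpace = tY ∧ @CompleteSpace Y m.toUniformSpace ∧
    (∃ B : Set (Set Y), @TopologicalSpace.IsTopologicalBasis Y tY B ∧ #B ≤ lam) ∧
    ∃ f : Y → (T lam → Bool), @Continuous Y _ tY (btop lam) f ∧ Set.range f = A

/-!
Let `f : Y → (λ → 2)` be continuous, `Y` complete metric with a dense family `pt` of size `≤ λ`.
Consider triples `(i, n, a)`, read as the ball of radius `2⁻ⁿ` around `pt i` labelled by `a < λ`,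
where one triple lies below another when its ball is smaller and nested in the other's and every
`w` in it satisfies `a' <_{f w} a`. A descending chain of triples shrinks to a point `y` at which
`<_{f y}` has a descending chain, so this relation is well-founded; living on a set of size `λ`,
its ranks are bounded by some `Λ < λ⁺`. By continuity of `f`, every element of the well-order
coded by `f y` has rank at most that of a triple, so no order type coded in the range of `f`
exceeds `Λ`.
-/

open Metric Filter Topology

section Rank

variable {lam : Cardinal.{u}} {Q : Type u}

theorem iSup_lt_ord_succ (hinf : ℵ₀ ≤ lam) (hQ : #Q ≤ lam) {f : Q → Ordinal.{u}}
    (hf : ∀ q, f q < (Order.succ lam).ord) : ⨆ q, f q < (Order.succ lam).ord :=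
  Ordinal.iSup_lt_of_lt_cof
    (by rw [(isRegular_succ hinf).cof_ord]; exact hQ.trans_lt (Order.lt_succ lam)) hf

theorem rank_lt_ord_succ (hinf : ℵ₀ ≤ lam) (hQ : #Q ≤ lam) (r : Q → Q → Prop)
    [IsWellFounded Q r] (q : Q) : IsWellFounded.rank r q < (Order.succ lam).ord := by
  induction q using IsWellFounded.induction r with
  | _ q IH =>
    rw [IsWellFounded.rank_eq]
    exact iSup_lt_ord_succ hinf ((mk_subtype_le _).trans hQ) fun b =>
      (isSuccLimit_ord (hinf.trans (Order.le_succ _))).succ_lt (IH b b.2)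

end Rank

theorem TopologicalSpace.IsTopologicalBasis.exists_denseRange {Y : Type u} [TopologicalSpace Y]
    {B : Set (Set Y)} (hB : IsTopologicalBasis B) :
    ∃ (ι : Type u) (pt : ι → Y), #ι ≤ #B ∧ DenseRange pt :=
  ⟨{s : Set Y // s ∈ B ∧ s.Nonempty}, fun s => s.2.2.some, mk_subtype_mono fun _ hs => hs.1,
    hB.dense_iff.2 fun o ho hne => ⟨hne.some, hne.some_mem, ⟨o, ho, hne⟩, rfl⟩⟩

section Approximation

variable {Y : Type*} {ι α : Type u} [PseudoMetricSpace Y] (pt : ι → Y) (E : Y → α → α → Prop)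

/-- `(i, n, a)` stands for the closed ball of radius `2⁻ⁿ` around `pt i`, labelled by `a`. -/
def approxRel (p q : ι × ℕ × α) : Prop :=
  q.2.1 < p.2.1 ∧
    closedBall (pt p.1) ((2⁻¹ : ℝ) ^ p.2.1) ⊆ closedBall (pt q.1) ((2⁻¹ : ℝ) ^ q.2.1) ∧
    ∀ w ∈ closedBall (pt p.1) ((2⁻¹ : ℝ) ^ p.2.1), E w p.2.2 q.2.2

theorem wellFounded_approxRel [CompleteSpace Y] (hE : ∀ y, WellFounded (E y)) :
    WellFounded (approxRel pt E) := by
  refine wellFounded_iff_isEmpty_descending_chain.2 ⟨fun ⟨g, hg⟩ => ?_⟩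
  set K : ℕ → Set Y := fun k => closedBall (pt (g k).1) ((2⁻¹ : ℝ) ^ (g k).2.1)
  have hK : Antitone K := antitone_nat_of_succ_le fun k => (hg k).2.1
  have hlevel : StrictMono fun k => (g k).2.1 := strictMono_nat_of_lt_succ fun k => (hg k).1
  have hdiam : Tendsto (fun k => 2 * (2⁻¹ : ℝ) ^ (g k).2.1) atTop (𝓝 0) := by
    simpa using ((tendsto_pow_atTop_nhds_zero_of_lt_one (by norm_num)
      (by norm_num : (2⁻¹ : ℝ) < 1)).comp hlevel.tendsto_atTop).const_mul (2 : ℝ)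
  obtain ⟨y, hy⟩ : (⋂ k, K k).Nonempty :=
    nonempty_iInter_of_nonempty_biInter (fun _ => isClosed_closedBall)
      (fun _ => isBounded_closedBall)
      (fun N => ⟨pt (g N).1,
        Set.mem_iInter₂.2 fun _ hk => hK hk (mem_closedBall_self (by positivity))⟩)
      (squeeze_zero (fun _ => diam_nonneg) (fun _ => diam_closedBall (by positivity)) hdiam)
  rw [Set.mem_iInter] at hy
  exact (wellFounded_iff_isEmpty_descending_chain.1 (hE y)).false
    ⟨fun k => (g k).2.2, fun k => (hg k).2.2 y (hy (k + 1))⟩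

variable {pt} [IsWellFounded (ι × ℕ × α) (approxRel pt E)]

theorem rank_le_rank_approxRel (hpt : DenseRange pt) {S : Type u} (s : S → S → Prop)
    [IsWellFounded S s] (φ : S → α) {y : Y} (hs : ∀ a b, s a b → ∀ᶠ w in 𝓝 y, E w (φ a) (φ b))
    (x : S) {i : ι} {n : ℕ} (hi : dist y (pt i) < (2⁻¹ : ℝ) ^ n / 4) :
    IsWellFounded.rank s x ≤ IsWellFounded.rank (approxRel pt E) (i, n, φ x) := by
  induction x using IsWellFounded.induction s generalizing i n with
  | _ x IH =>
  rw [IsWellFounded.rank_eq, Ordinal.iSup_le_iff]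
  rintro ⟨b, hb⟩
  obtain ⟨r, hr, hball⟩ := Metric.eventually_nhds_iff.1 (hs b x hb)
  obtain ⟨n', hn'r, hnn'⟩ := (((tendsto_pow_atTop_nhds_zero_of_lt_one (by norm_num)
    (by norm_num : (2⁻¹ : ℝ) < 1)).eventually (gt_mem_nhds (half_pos hr))).and
    (eventually_gt_atTop n)).exists
  obtain ⟨i', hi'⟩ := denseRange_iff.1 hpt y _ (by positivity : (0 : ℝ) < (2⁻¹ : ℝ) ^ n' / 4)
  have hρ : (2⁻¹ : ℝ) ^ n' ≤ (2⁻¹ : ℝ) ^ n / 2 := by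
    calc (2⁻¹ : ℝ) ^ n' ≤ (2⁻¹ : ℝ) ^ (n + 1) :=
          pow_le_pow_of_le_one (by norm_num) (by norm_num) hnn'
      _ = (2⁻¹ : ℝ) ^ n / 2 := by ring
  have hstep : approxRel pt E (i', n', φ b) (i, n, φ x) := by
    refine ⟨hnn', closedBall_subset_closedBall' ?_, fun w hw => hball ?_⟩
    · show (2⁻¹ : ℝ) ^ n' + dist (pt i') (pt i) ≤ (2⁻¹ : ℝ) ^ n
      linarith [dist_triangle_left (pt i') (pt i) y, pow_nonneg (by norm_num : (0 : ℝ) ≤ 2⁻¹) n]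
    · exact closedBall_subset_ball' (by linarith [dist_comm y (pt i')]) hw
  exact Order.succ_le_of_lt ((IH b hb hi').trans_lt (IsWellFounded.rank_lt_of_rel hstep))

end Approximation

theorem type_le_iSup_succ_rank_approxRel {Y : Type*} {ι α S : Type u} [PseudoMetricSpace Y]
    {pt : ι → Y} (hpt : DenseRange pt) (E : Y → α → α → Prop)
    [IsWellFounded (ι × ℕ × α) (approxRel pt E)] (s : S → S → Prop) [IsWellOrder S s]
    (φ : S → α) {y : Y} (hs : ∀ a b, s a b → ∀ᶠ w in 𝓝 y, E w (φ a) (φ b)) :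
    Ordinal.type s ≤ ⨆ q, Order.succ (IsWellFounded.rank (approxRel pt E) q) := by
  by_contra! h
  obtain ⟨x, hx⟩ := Ordinal.typein_surj s h
  obtain ⟨i, hi⟩ := denseRange_iff.1 hpt y (2⁻¹ ^ 0 / 4) (by norm_num)
  have hle := rank_le_rank_approxRel E hpt s φ hs x hi
  rw [IsWellFounded.rank_eq_typein, hx] at hle
  exact hle.not_gt ((Order.lt_succ _).trans_le (Ordinal.le_iSup _ (i, 0, φ x)))

theorem wellFounded_Ez_of_codesWO {lam : Cardinal.{u}} {pair : T lam × T lam ≃ T lam}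
    {z : T lam → Bool} {α : Ordinal.{u}} (h : codesWO pair z α) : WellFounded (Ez pair z) := by
  obtain ⟨S, hfield, hwo, -⟩ := h
  refine wellFounded_iff_isEmpty_descending_chain.2 ⟨fun ⟨g, hg⟩ => ?_⟩
  exact (wellFounded_iff_isEmpty_descending_chain.1 hwo.wf).false
    ⟨fun k => ⟨g k, (hfield _ _ (hg k)).2⟩, hg⟩

theorem isOpen_btop_setOf_apply_eq {lam : Cardinal.{u}} (hinf : ℵ₀ ≤ lam) (c : T lam) (v : Bool) :
    IsOpen[btop lam] {x | x c = v} := by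
  let := btop lam
  have := noMaxOrder hinf
  obtain ⟨b, hb⟩ := exists_gt c
  exact isOpen_iff_forall_mem_open.2 fun x hx => ⟨{y | ∀ a < b, y a = x a},
    fun y hy => (hy c hb).trans hx, TopologicalSpace.isOpen_generateFrom_of_mem ⟨b, x, rfl⟩,
    fun _ _ => rfl⟩

theorem not_analytic_of_unbounded_general (lam : Cardinal.{u}) (hinf : ℵ₀ ≤ lam)
    (pair : T lam × T lam ≃ T lam) (A : Set (T lam → Bool))
    (hWO : ∀ z ∈ A, ∃ α : Ordinal.{u}, codesWO pair z α)
    (hUnb : ∀ β : Ordinal.{u}, β < (Order.succ lam).ord →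
      ∃ z ∈ A, ∃ α : Ordinal.{u}, β ≤ α ∧ codesWO pair z α) :
    ¬ IsLamAnalytic lam A := by
  rintro ⟨Y, tY, m, rfl, hcomp, ⟨B, hB, hBcard⟩, f, hf, rfl⟩
  let := m
  obtain ⟨ι, pt, hι, hpt⟩ := hB.exists_denseRange
  let E : Y → T lam → T lam → Prop := fun w => Ez pair (f w)
  have hE : ∀ a b, IsOpen {w | E w a b} := fun a b =>
    @Continuous.isOpen_preimage _ _ _ (btop lam) f hf _ (isOpen_btop_setOf_apply_eq hinf _ _)
  have : IsWellFounded _ (approxRel pt E) := ⟨wellFounded_approxRel pt E fun w =>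
    (hWO _ ⟨w, rfl⟩).elim fun _ h => wellFounded_Ez_of_codesWO h⟩
  have hQ : #(ι × ℕ × T lam) ≤ lam := by
    simpa [mk_prod] using mul_le_of_le hinf (hι.trans hBcard) (mul_le_of_le hinf hinf le_rfl)
  have hlim := isSuccLimit_ord (hinf.trans (Order.le_succ lam))
  have hΛ := iSup_lt_ord_succ hinf hQ fun q =>
    hlim.succ_lt (rank_lt_ord_succ hinf hQ (approxRel pt E) q)
  obtain ⟨_, ⟨y, rfl⟩, _, hα, S, -, hwo, rfl⟩ := hUnb _ (hlim.succ_lt hΛ)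
  have htype := type_le_iSup_succ_rank_approxRel hpt E (fun a b : S => Ez pair (f y) a.1 b.1)
    Subtype.val fun a b hab => (hE a.1 b.1).mem_nhds hab
  exact (Order.lt_succ _).not_ge (hα.trans htype)

/-- Boundedness Lemma, contrapositive form. If `2^{<λ} = λ` and
`A ⊆ WO_λ` codes well-orders of order types unbounded in `λ⁺`, then `A` is not
λ-analytic. -/
theorem not_analytic_of_unbounded (lam : Cardinal.{u}) (hinf : ℵ₀ ≤ lam)
    (hsl : ∀ μ : Cardinal.{u}, μ < lam → (2 : Cardinal.{u}) ^ μ ≤ lam)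
    (pair : T lam × T lam ≃ T lam) (A : Set (T lam → Bool))
    (hWO : ∀ z ∈ A, ∃ α : Ordinal.{u}, codesWO pair z α)
    (hUnb : ∀ β : Ordinal.{u}, β < (Order.succ lam).ord →
      ∃ z ∈ A, ∃ α : Ordinal.{u}, β ≤ α ∧ codesWO pair z α) :
    ¬ IsLamAnalytic lam A :=
  not_analytic_of_unbounded_general lam hinf pair A hWO hUnb
end

section
/- Let λ be an uncountable cardinal with 2^{<λ} = λ, and let A ⊆ WO_λ be a set containing, for each α < λ⁺, exactly one code of order type α. Then A does not have the λ-Perfect Set Property: A has cardinality λ⁺ > λ, and there is no topological embedding of λ→2 into A. -/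
universe u
open Cardinal

/-- `f` is a topological embedding from `(X, τX)` to `(Y, τY)`:
injective, continuous, and inducing (every open set is the preimage of an open set). -/
def IsTopEmb {X Y : Type u} (τX : TopologicalSpace X) (τY : TopologicalSpace Y)
    (f : X → Y) : Prop :=
  Function.Injective f ∧ @Continuous X Y τX τY f ∧
    ∀ U : Set X, @IsOpen X τX U → ∃ V : Set Y, @IsOpen Y τY V ∧ f ⁻¹' V = U

/-!
A selector `A` meets every order type below `λ⁺` exactly once, and a code of a well-order with
at least two elements determines its order type; hence `A` is in bijection with a set of `λ⁺`
ordinals, and `|A| = λ⁺`. If `λ → 2` embedded into `A`, its image would be a λ-analytic subset of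
`WO_λ`, so by the Boundedness Lemma its order types would be bounded by some `β < λ⁺`; being a
subset of the selector, the image would then have size at most `|β + 1| ≤ λ < 2^λ`.
-/

open Set Order

lemma eq_field_of_trichotomous {α : Type*} {r : α → α → Prop} {S : Set α}
    (hfield : ∀ a b, r a b → a ∈ S ∧ b ∈ S) (htri : ∀ a b : S, ¬r a b → ¬r b a → a = b)
    {u v : α} (huv : r u v) : S = {a | ∃ b, r a b ∨ r b a} := by
  ext s
  refine ⟨fun hs => ?_, fun ⟨b, hb⟩ => hb.elim (hfield _ _ · |>.1) (hfield _ _ · |>.2)⟩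
  by_contra hne
  simp only [mem_ofPred_eq, not_exists, not_or] at hne
  cases congrArg Subtype.val <| htri ⟨s, hs⟩ ⟨u, (hfield u v huv).1⟩ (hne u).1 (hne u).2
  exact (hne v).1 huv

lemma mk_le_card_of_injective_Iio {X : Type u} {o : Ordinal.{u}} {f : X → Iio o}
    (hf : Function.Injective f) : #X ≤ o.card := by
  have := lift_mk_le_lift_mk_of_injective hf
  rwa [mk_Iio_ordinal, lift_lift, lift_le] at this

lemma card_le_mk_of_injective_Iio {X : Type u} {o : Ordinal.{u}} {f : Iio o → X}
    (hf : Function.Injective f) : o.card ≤ #X := by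
  have := lift_mk_le_lift_mk_of_injective hf
  rwa [mk_Iio_ordinal, lift_lift, lift_le] at this

section Codes

variable {lam : Cardinal.{u}} (pair : T lam × T lam ≃ T lam)

lemma codesWO_eq_of_two_le {z : T lam → Bool} {α β : Ordinal.{u}} (hα : codesWO pair z α)
    (hβ : codesWO pair z β) (h2 : 2 ≤ α) : α = β := by
  obtain ⟨S₁, hF₁, hwo₁, rfl⟩ := hα
  obtain ⟨S₂, hF₂, hwo₂, rfl⟩ := hβ
  obtain ⟨a, b, hab⟩ : ∃ a b : S₁, a ≠ b := by
    simpa [two_le_iff] using Ordinal.card_le_card h2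
  obtain ⟨u, v, huv⟩ : ∃ u v, Ez pair z u v := by
    by_contra! hnone
    exact hab (hwo₁.trichotomous a b (hnone a b) (hnone b a))
  obtain rfl := (eq_field_of_trichotomous hF₁ hwo₁.trichotomous huv).trans
    (eq_field_of_trichotomous hF₂ hwo₂.trichotomous huv).symm
  rfl

variable {A : Set (T lam → Bool)}
  (hA1 : ∀ α : Ordinal.{u}, α < (succ lam).ord → ∃! z : T lam → Bool, z ∈ A ∧ codesWO pair z α)
include hA1

lemma mk_le_card_of_forall_codesWO {B : Set (T lam → Bool)} (hBA : B ⊆ A) {o : Ordinal.{u}}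
    (ho : o ≤ (succ lam).ord) (hB : ∀ z ∈ B, ∃ α < o, codesWO pair z α) : #B ≤ o.card := by
  choose g hg_lt hg_codes using hB
  refine mk_le_card_of_injective_Iio (f := fun z : B => ⟨g z z.2, hg_lt _ _⟩) fun z₁ z₂ h => ?_
  have hg : g z₁ z₁.2 = g z₂ z₂.2 := congrArg Subtype.val h
  exact Subtype.ext <| (hA1 _ ((hg_lt _ _).trans_le ho)).unique
    ⟨hBA z₁.2, hg ▸ hg_codes _ _⟩ ⟨hBA z₂.2, hg_codes _ _⟩

/-- Codes of types `0` and `1` can share the empty relation, so the injection `λ⁺ → A` sends `α`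
to the code of type `2 + α`. -/
lemma succ_le_mk_of_forall_existsUnique (hlam : ℵ₀ ≤ lam) : succ lam ≤ #A := by
  have hsucc : ℵ₀ ≤ succ lam := hlam.trans (le_succ lam)
  have hlt : ∀ α < (succ lam).ord, 2 + α < (succ lam).ord := fun α hα =>
    Ordinal.isPrincipal_add_ord hsucc
      ((Ordinal.natCast_lt_omega0 2).trans_le (omega0_le_ord.2 hsucc)) hα
  choose c hcA hc using fun α : Iio (succ lam).ord => (hA1 _ (hlt α α.2)).exists
  have := card_le_mk_of_injective_Iio (f := fun α => (⟨c α, hcA α⟩ : A)) fun α β h => by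
    have hc_eq : c α = c β := Subtype.mk.inj h
    exact Subtype.ext <| add_left_cancel <|
      codesWO_eq_of_two_le pair (hc_eq ▸ hc α) (hc β) le_self_add
  simpa using this

end Codes

theorem selector_fails_PSP_general (lam : Cardinal.{u}) (hunc : ℵ₀ < lam)
    (pair : T lam × T lam ≃ T lam)
    (hBound : ∀ B : Set (T lam → Bool), IsLamAnalytic lam B →
      (∀ z ∈ B, ∃ α : Ordinal.{u}, codesWO pair z α) →
      ∃ β : Ordinal.{u}, β < (Order.succ lam).ord ∧
        ∀ z ∈ B, ∀ α : Ordinal.{u}, codesWO pair z α → α ≤ β)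
    (hImg : ∀ f : (T lam → Bool) → (T lam → Bool),
      @Continuous _ _ (btop lam) (btop lam) f → Function.Injective f →
      IsLamAnalytic lam (Set.range f))
    (A : Set (T lam → Bool))
    (hA1 : ∀ α : Ordinal.{u}, α < (Order.succ lam).ord →
      ∃! z : T lam → Bool, z ∈ A ∧ codesWO pair z α)
    (hA2 : ∀ z ∈ A, ∃ α : Ordinal.{u}, α < (Order.succ lam).ord ∧ codesWO pair z α) :
    #A = Order.succ lam ∧ lam < #A ∧
      ¬ ∃ f : (T lam → Bool) → (T lam → Bool),
        IsTopEmb (btop lam) (btop lam) f ∧ Set.range f ⊆ A := by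
  have hmk : #A = succ lam := le_antisymm
    (by simpa using mk_le_card_of_forall_codesWO pair hA1 subset_rfl le_rfl hA2)
    (succ_le_mk_of_forall_existsUnique pair hA1 hunc.le)
  refine ⟨hmk, hmk ▸ lt_succ lam, ?_⟩
  rintro ⟨f, ⟨hinj, hcont, -⟩, hfA⟩
  obtain ⟨β, hβ, hle⟩ := hBound _ (hImg f hcont hinj) fun z hz =>
    (hA2 z (hfA hz)).imp fun _ => And.right
  have hsuccβ : succ β < (succ lam).ord :=
    (isSuccLimit_ord (hunc.le.trans (le_succ lam))).succ_lt hβ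
  have hrange : #(range f) ≤ lam := calc
    #(range f) ≤ (succ β).card := mk_le_card_of_forall_codesWO pair hA1 hfA hsuccβ.le fun z hz =>
        let ⟨α, _, hα⟩ := hA2 z (hfA hz)
        ⟨α, lt_succ_iff.2 (hle z hz α hα), hα⟩
    _ ≤ lam := lt_succ_iff.1 (lt_ord.1 hsuccβ)
  rw [mk_range_eq f hinj] at hrange
  exact (cantor lam).not_ge (by simpa using hrange)

/-- Let `λ` be an uncountable cardinal with `2^{<λ} = λ` and let `A ⊆ WO_λ`
contain, for each `α < λ⁺`, exactly one code of order type `α`.  Then (assuming the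
Boundedness Lemma and that continuous injective images of `λ → 2` are λ-analytic)
`A` fails the λ-PSP: `|A| = λ⁺ > λ` and there is no topological embedding of `λ → 2`
into `A`. -/
theorem selector_fails_PSP (lam : Cardinal.{u}) (hunc : ℵ₀ < lam)
    (hsl : ∀ μ : Cardinal.{u}, μ < lam → (2 : Cardinal.{u}) ^ μ ≤ lam)
    (pair : T lam × T lam ≃ T lam)
    (hBound : ∀ B : Set (T lam → Bool), IsLamAnalytic lam B →
      (∀ z ∈ B, ∃ α : Ordinal.{u}, codesWO pair z α) →
      ∃ β : Ordinal.{u}, β < (Order.succ lam).ord ∧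
        ∀ z ∈ B, ∀ α : Ordinal.{u}, codesWO pair z α → α ≤ β)
    (hImg : ∀ f : (T lam → Bool) → (T lam → Bool),
      @Continuous _ _ (btop lam) (btop lam) f → Function.Injective f →
      IsLamAnalytic lam (Set.range f))
    (A : Set (T lam → Bool))
    (hA1 : ∀ α : Ordinal.{u}, α < (Order.succ lam).ord →
      ∃! z : T lam → Bool, z ∈ A ∧ codesWO pair z α)
    (hA2 : ∀ z ∈ A, ∃ α : Ordinal.{u}, α < (Order.succ lam).ord ∧ codesWO pair z α) :
    #A = Order.succ lam ∧ lam < #A ∧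
      ¬ ∃ f : (T lam → Bool) → (T lam → Bool),
        IsTopEmb (btop lam) (btop lam) f ∧ Set.range f ⊆ A :=
  selector_fails_PSP_general lam hunc pair hBound hImg A hA1 hA2
end

section
/- Let λ be a strong limit cardinal of countable cofinality. Then the generalized Cantor space λ→2 with the bounded topology has weight exactly λ, and in particular has a dense subset of size λ. -/
universe u
open Cardinal

/-!
The cylinders `{x | x ↾ b = s}` for `b < λ` form a base of the bounded topology; since `λ` is a
strong limit there are `Σ_{b<λ} 2^|b| ≤ λ` of them, and the functions that are eventually `0` form
a dense set of the same size. Conversely, the `2^|b|` cylinders of level `b` are pairwise disjoint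
nonempty open sets, so every base and every dense set has at least `2^|b| > |b|` elements, and
`|b|` takes every value below `λ`.
-/

universe v

open Set TopologicalSpace Filter Function

section DisjointOpenFamily

variable {X : Type u} {ι : Type v} [TopologicalSpace X] {U : ι → Set X}

theorem TopologicalSpace.IsTopologicalBasis.lift_mk_le_of_pairwise_disjoint {B : Set (Set X)}
    (hB : IsTopologicalBasis B) (hUo : ∀ i, IsOpen (U i)) (hUne : ∀ i, (U i).Nonempty)
    (hUd : Pairwise (Disjoint on U)) : lift.{u} #ι ≤ lift.{v} #B := by
  have hsub : ∀ i, ∃ V ∈ B, V.Nonempty ∧ V ⊆ U i := fun i ↦ by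
    obtain ⟨x, hx⟩ := hUne i
    obtain ⟨V, hVB, hxV, hVU⟩ := hB.exists_subset_of_mem_open hx (hUo i)
    exact ⟨V, hVB, ⟨x, hxV⟩, hVU⟩
  choose V hVB hVne hVU using hsub
  refine lift_mk_le_lift_mk_of_injective (f := fun i ↦ (⟨V i, hVB i⟩ : B)) fun i j hij ↦ ?_
  by_contra hne
  obtain ⟨x, hx⟩ := hVne i
  have hVij : V i = V j := congrArg Subtype.val hij
  exact (hUd hne).le_bot ⟨hVU i hx, hVU j (hVij ▸ hx)⟩

theorem Dense.lift_mk_le_of_pairwise_disjoint {D : Set X} (hD : Dense D)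
    (hUo : ∀ i, IsOpen (U i)) (hUne : ∀ i, (U i).Nonempty)
    (hUd : Pairwise (Disjoint on U)) : lift.{u} #ι ≤ lift.{v} #D := by
  choose x hxU hxD using fun i ↦ hD.inter_open_nonempty (U i) (hUo i) (hUne i)
  refine lift_mk_le_lift_mk_of_injective (f := fun i ↦ (⟨x i, hxD i⟩ : D)) fun i j hij ↦ ?_
  by_contra hne
  have hxij : x i = x j := congrArg Subtype.val hij
  exact (hUd hne).le_bot ⟨hxU i, hxij ▸ hxU j⟩

end DisjointOpenFamily

section BoundedTopology

variable {α : Type u} {β : Type v} [LinearOrder α]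

/-- `btop lam` is, by definition, `generateFrom (boundedCylinders (T lam) Bool)`. -/
def boundedCylinders (α : Type u) (β : Type v) [LT α] : Set (Set (α → β)) :=
  {V | ∃ (b : α) (s : α → β), V = {x | ∀ a : α, a < b → x a = s a}}

def cylinder (b : α) (t : Iio b → β) : Set (α → β) :=
  {x | ∀ a (h : a < b), x a = t ⟨a, h⟩}

theorem isTopologicalBasis_boundedCylinders [Nonempty α] :
    @IsTopologicalBasis _ (generateFrom (boundedCylinders α β)) (boundedCylinders α β) := by
  let := generateFrom (boundedCylinders α β)
  refine ⟨?_, ?_, rfl⟩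
  · rintro _ ⟨b₁, s₁, rfl⟩ _ ⟨b₂, s₂, rfl⟩ x ⟨hx₁, hx₂⟩
    refine ⟨_, ⟨max b₁ b₂, x, rfl⟩, fun a _ ↦ rfl, fun y hy ↦ ⟨fun a ha ↦ ?_, fun a ha ↦ ?_⟩⟩
    · exact (hy a (lt_max_of_lt_left ha)).trans (hx₁ a ha)
    · exact (hy a (lt_max_of_lt_right ha)).trans (hx₂ a ha)
  · obtain ⟨b⟩ := ‹Nonempty α›
    exact sUnion_eq_univ_iff.2 fun x ↦ ⟨_, ⟨b, x, rfl⟩, fun a _ ↦ rfl⟩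

theorem boundedCylinders_subset_range_cylinder :
    boundedCylinders α β ⊆ range fun p : Σ b : α, Iio b → β ↦ cylinder p.1 p.2 := by
  rintro _ ⟨b, s, rfl⟩
  exact ⟨⟨b, fun a ↦ s a⟩, rfl⟩

theorem mk_boundedCylinders_le : #(boundedCylinders α β) ≤ #(Σ b : α, Iio b → β) :=
  (mk_le_mk_of_subset boundedCylinders_subset_range_cylinder).trans mk_range_le

theorem isOpen_cylinder (b : α) (t : Iio b → β) :
    @IsOpen _ (generateFrom (boundedCylinders α β)) (cylinder b t) := by
  let := generateFrom (boundedCylinders α β)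
  refine isOpen_iff_forall_mem_open.2 fun x hx ↦ ⟨_, ?_, isOpen_generateFrom_of_mem ⟨b, x, rfl⟩,
    fun a _ ↦ rfl⟩
  exact fun y hy a ha ↦ (hy a ha).trans (hx a ha)

theorem extend_mem_cylinder (b : α) (t : Iio b → β) (d : β) :
    Function.extend Subtype.val t (fun _ ↦ d) ∈ cylinder b t :=
  fun a ha ↦ Subtype.val_injective.extend_apply t _ ⟨a, ha⟩

theorem nonempty_cylinder [Nonempty β] (b : α) (t : Iio b → β) : (cylinder b t).Nonempty :=
  ⟨_, extend_mem_cylinder b t (Classical.arbitrary β)⟩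

theorem pairwise_disjoint_cylinder (b : α) :
    Pairwise (Disjoint on (cylinder b : (Iio b → β) → Set (α → β))) := by
  intro t t' hne
  refine Set.disjoint_left.2 fun x hx hx' ↦ hne (funext fun a ↦ ?_)
  rw [← hx a a.2, ← hx' a a.2]

theorem mk_Iio_fun_le_of_isTopologicalBasis [Nonempty β] {B : Set (Set (α → β))}
    (hB : @IsTopologicalBasis _ (generateFrom (boundedCylinders α β)) B) (b : α) :
    #(Iio b → β) ≤ #B := by
  let := generateFrom (boundedCylinders α β)
  simpa using hB.lift_mk_le_of_pairwise_disjoint (isOpen_cylinder b) (nonempty_cylinder b)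
    (pairwise_disjoint_cylinder b)

theorem mk_Iio_fun_le_of_dense [Nonempty β] {D : Set (α → β)}
    (hD : @Dense _ (generateFrom (boundedCylinders α β)) D) (b : α) :
    #(Iio b → β) ≤ #D := by
  let := generateFrom (boundedCylinders α β)
  simpa using hD.lift_mk_le_of_pairwise_disjoint (isOpen_cylinder b) (nonempty_cylinder b)
    (pairwise_disjoint_cylinder b)

def eventuallyEqConst (α : Type u) [LinearOrder α] (d : β) : Set (α → β) :=
  {x | ∀ᶠ a in atTop, x a = d}

theorem extend_mem_eventuallyEqConst (b : α) (t : Iio b → β) (d : β) :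
    Function.extend Subtype.val t (fun _ ↦ d) ∈ eventuallyEqConst α d := by
  filter_upwards [eventually_ge_atTop b] with a hba
  refine Function.extend_apply' _ _ _ ?_
  rintro ⟨c, rfl⟩
  exact c.2.not_ge hba

theorem dense_eventuallyEqConst [Nonempty α] (d : β) :
    @Dense _ (generateFrom (boundedCylinders α β)) (eventuallyEqConst α d) := by
  let := generateFrom (boundedCylinders α β)
  refine isTopologicalBasis_boundedCylinders.dense_iff.2 fun V hV _ ↦ ?_
  obtain ⟨⟨b, t⟩, rfl⟩ := boundedCylinders_subset_range_cylinder hV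
  exact ⟨_, extend_mem_cylinder b t d, extend_mem_eventuallyEqConst b t d⟩

theorem eventuallyEqConst_subset_range_extend [Nonempty α] (d : β) :
    eventuallyEqConst α d ⊆
      range fun p : Σ b : α, Iio b → β ↦ Function.extend Subtype.val p.2 (fun _ ↦ d) := by
  intro x hx
  obtain ⟨b, hb⟩ := eventually_atTop.1 hx
  refine ⟨⟨b, fun a ↦ x a⟩, funext fun a ↦ ?_⟩
  rcases lt_or_ge a b with hab | hba
  · exact Subtype.val_injective.extend_apply _ _ (⟨a, hab⟩ : Iio b)
  · refine (Function.extend_apply' _ _ _ ?_).trans (hb a hba).symm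
    rintro ⟨c, rfl⟩
    exact c.2.not_ge hba

theorem mk_eventuallyEqConst_le [Nonempty α] (d : β) :
    #(eventuallyEqConst α d) ≤ #(Σ b : α, Iio b → β) :=
  (mk_le_mk_of_subset (eventuallyEqConst_subset_range_extend d)).trans mk_range_le

end BoundedTopology

theorem Cardinal.exists_mk_Iio_toType_ord_eq {c κ : Cardinal.{u}} (h : κ < c) :
    ∃ b : c.ord.ToType, #(Iio b) = κ := by
  let x : Iio c.ord := ⟨κ.ord, ord_lt_ord.2 h⟩
  refine ⟨Ordinal.ToType.mk x, ?_⟩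
  -- `#(Iio b)` is definitionally the cardinal of the ordinal `typein (· < ·) b`
  change (Ordinal.ToType.mk.symm (Ordinal.ToType.mk x)).1.card = κ
  rw [OrderIso.symm_apply_apply, card_ord]

theorem Cardinal.le_of_forall_two_power_mk_Iio_le {c C : Cardinal.{u}}
    (h : ∀ b : c.ord.ToType, 2 ^ #(Iio b) ≤ C) : c ≤ C := by
  by_contra! hC
  obtain ⟨b, hb⟩ := exists_mk_Iio_toType_ord_eq hC
  exact (h b).not_gt (hb ▸ cantor C)

theorem Cardinal.IsStrongLimit.mk_sigma_Iio_fun_bool_le {c : Cardinal.{u}}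
    (hc : c.IsStrongLimit) : #(Σ b : c.ord.ToType, Iio b → Bool) ≤ c := by
  calc #(Σ b : c.ord.ToType, Iio b → Bool) = sum fun b : c.ord.ToType ↦ 2 ^ #(Iio b) := by
        simp [mk_sigma]
    _ ≤ sum fun _ : c.ord.ToType ↦ c :=
        sum_le_sum _ _ fun b ↦
          (hc.isStrongPrelimit ((mk_Iio_lt b (by simp)).trans_eq (mk_ord_toType c))).le
    _ = c := by rw [sum_const', mk_ord_toType, mul_eq_self hc.aleph0_le]

theorem weight_of_generalised_cantor_general (lam : Cardinal.{u})
    (hsl : lam.IsStrongLimit) :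
    (∃ B : Set (Set (T lam → Bool)),
      @TopologicalSpace.IsTopologicalBasis _ (btop lam) B ∧ #B = lam) ∧
    (∀ B : Set (Set (T lam → Bool)),
      @TopologicalSpace.IsTopologicalBasis _ (btop lam) B → lam ≤ #B) ∧
    (∃ D : Set (T lam → Bool), @Dense _ (btop lam) D ∧ #D = lam) := by
  let := btop lam
  have : Nonempty (T lam) := Ordinal.nonempty_toType_iff.2 (by simpa using hsl.ne_zero)
  have hbasis : IsTopologicalBasis (boundedCylinders (T lam) Bool) :=
    isTopologicalBasis_boundedCylinders
  have hdense : Dense (eventuallyEqConst (T lam) false) := dense_eventuallyEqConst false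
  have basis_lower (B : Set (Set (T lam → Bool))) (hB : IsTopologicalBasis B) : lam ≤ #B :=
    le_of_forall_two_power_mk_Iio_le fun b ↦ by
      simpa using mk_Iio_fun_le_of_isTopologicalBasis hB b
  refine ⟨⟨_, hbasis, ?_⟩, basis_lower, ⟨_, hdense, ?_⟩⟩
  · exact (mk_boundedCylinders_le.trans hsl.mk_sigma_Iio_fun_bool_le).antisymm
      (basis_lower _ hbasis)
  · refine ((mk_eventuallyEqConst_le false).trans hsl.mk_sigma_Iio_fun_bool_le).antisymm
      (le_of_forall_two_power_mk_Iio_le fun b ↦ ?_)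
    simpa using mk_Iio_fun_le_of_dense hdense b

/-- For `λ` a strong limit cardinal of countable cofinality, the generalised
Cantor space `λ → 2` with the bounded topology has weight exactly `λ`: it has a base of
size `λ`, every base has size at least `λ`, and in particular it has a dense subset of
size `λ`. -/
theorem weight_of_generalised_cantor (lam : Cardinal.{u})
    (hsl : lam.IsStrongLimit) (hcof : lam.ord.cof = ℵ₀) :
    (∃ B : Set (Set (T lam → Bool)),
      @TopologicalSpace.IsTopologicalBasis _ (btop lam) B ∧ #B = lam) ∧
    (∀ B : Set (Set (T lam → Bool)),
      @TopologicalSpace.IsTopologicalBasis _ (btop lam) B → lam ≤ #B) ∧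
    (∃ D : Set (T lam → Bool), @Dense _ (btop lam) D ∧ #D = lam) :=
  weight_of_generalised_cantor_general lam hsl
end

section
/- Let λ be a singular strong limit cardinal of countable cofinality with λ = sup_{n<ω} λₙ for an increasing sequence of cardinals λₙ. Then λ→2 with the bounded topology is homeomorphic to the countable product ∏_{n<ω} (λₙ→2), where each factor λₙ→2 carries the box topology with full support below λₙ generated by the sets {x : x(α)=i} (a discrete topology); hence λ→2 with the bounded topology is completely metrizable. -/
universe u
open Cardinal

/-- Let `λ` be a singular strong limit cardinal of countable cofinality,
`λ = sup_n λₙ` for a strictly increasing sequence of cardinals.  Then `λ → 2` with the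
bounded topology is homeomorphic to the countable product `∏ₙ (λₙ → 2)` of discrete
spaces, and hence is completely metrizable. -/
theorem generalised_cantor_metrizable (lam : Cardinal.{u})
    (hsl : lam.IsStrongLimit) (hcof : lam.ord.cof = ℵ₀)
    (lamn : ℕ → Cardinal.{u}) (hmono : StrictMono lamn) (hsup : lam = ⨆ n, lamn n) :
    Nonempty (@Homeomorph (T lam → Bool) (∀ n : ℕ, (lamn n).ord.ToType → Bool)
      (btop lam) (@Pi.topologicalSpace ℕ _ (fun _ => ⊥))) ∧
    ∃ m : MetricSpace (T lam → Bool),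
      m.toUniformSpace.toTopologicalSpace = btop lam ∧ @CompleteSpace _ m.toUniformSpace := by
  classical
  -- abbreviations
  set ν : ℕ → Ordinal.{u} := fun n => (lamn n).ord with hν
  -- the sequence of interval endpoints
  let o : ℕ → Ordinal.{u} := fun n => Nat.rec 0 (fun n acc => acc + ν n) n
  have ho0 : o 0 = 0 := rfl
  have hosucc : ∀ n, o (n + 1) = o n + ν n := fun _ => rfl
  have hlamn_lt : ∀ n, lamn n < lam := by
    intro n
    calc lamn n < lamn (n + 1) := hmono (Nat.lt_succ_self n)
      _ ≤ ⨆ n, lamn n := le_ciSup (Cardinal.bddAbove_range _) _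
      _ = lam := hsup.symm
  have hocard : ∀ n, (o n).card < lam := by
    intro n
    induction n with
    | zero => simpa [ho0] using lt_of_lt_of_le aleph0_pos hsl.aleph0_le
    | succ n ih =>
      rw [hosucc, Ordinal.card_add]
      exact Cardinal.add_lt_of_lt hsl.aleph0_le ih
        (by simpa [hν, Cardinal.card_ord] using hlamn_lt n)
  have holt : ∀ n, o n < lam.ord := fun n => Cardinal.lt_ord.2 (hocard n)
  have homono : Monotone o := monotone_nat_of_le_succ fun n => by
    rw [hosucc]; exact le_self_add
  have hblock : ∀ n (x : Ordinal.{u}), x < ν n → o n + x < o (n + 1) := fun n x hx => by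
    rw [hosucc]; exact add_lt_add_right hx (o n)
  have hcov : ∀ a : Ordinal.{u}, a < lam.ord → ∃ N, a < o N := by
    intro a ha
    have hord : lam.ord = ⨆ n, ν n := by
      rw [hsup, Ordinal.iSup_ord]
    rw [hord] at ha
    obtain ⟨n, hn⟩ := Ordinal.lt_iSup_iff.1 ha
    exact ⟨n + 1, hn.trans_le (by rw [hosucc]; exact le_add_self)⟩
  -- the sigma-equivalence at the level of sets of ordinals
  let g : (Σ n : ℕ, Set.Iio (ν n)) → Set.Iio lam.ord := fun p =>
    ⟨o p.1 + p.2.1, (hblock p.1 p.2.1 p.2.2).trans (holt (p.1 + 1))⟩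
  have hg_lt : ∀ p : (Σ n : ℕ, Set.Iio (ν n)), (g p).1 < o (p.1 + 1) := fun p =>
    hblock p.1 p.2.1 p.2.2
  have hg_le : ∀ p : (Σ n : ℕ, Set.Iio (ν n)), o p.1 ≤ (g p).1 := fun p =>
    le_self_add
  have hg_inj : Function.Injective g := by
    rintro ⟨m, x, hx⟩ ⟨n, y, hy⟩ h
    simp only [g, Subtype.mk.injEq] at h
    have hmn : m = n := by
      by_contra hne
      rcases Nat.lt_or_ge m n with hlt | hge
      · have h1 : o m + x < o n := (hblock m x hx).trans_le (homono hlt)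
        have h2 : o n ≤ o n + y := le_self_add
        exact absurd h (ne_of_lt (h1.trans_le h2))
      · have hgt : n < m := lt_of_le_of_ne hge (Ne.symm hne)
        have h1 : o n + y < o m := (hblock n y hy).trans_le (homono hgt)
        have h2 : o m ≤ o m + x := le_self_add
        exact absurd h.symm (ne_of_lt (h1.trans_le h2))
    subst hmn
    have hxy : x = y := (add_right_inj (o m)).1 (congrArg Subtype.val h)
    subst hxy
    rfl
  have hg_surj : Function.Surjective g := by
    rintro ⟨a, ha⟩
    have hex : ∃ N, a < o N := hcov a ha
    obtain ⟨M, hM1, hM2⟩ : ∃ M, o M ≤ a ∧ a < o (M + 1) := by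
      have hne : Nat.find hex ≠ 0 := by
        intro h0
        have := Nat.find_spec hex
        rw [h0, ho0] at this
        exact absurd this (by simp)
      obtain ⟨M, hM⟩ := Nat.exists_eq_succ_of_ne_zero hne
      refine ⟨M, ?_, by have h := Nat.find_spec hex; rw [hM] at h; exact h⟩
      exact le_of_not_gt (Nat.find_min hex (by omega))
    refine ⟨⟨M, a - o M, ?_⟩, ?_⟩
    · show a - o M < ν M
      rw [Ordinal.sub_lt_of_le hM1, ← hosucc]
      exact hM2
    · exact Subtype.ext (Ordinal.add_sub_cancel_of_le hM1)
  -- the equivalence between the sigma type of blocks and `T lam`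
  let iL : Set.Iio lam.ord ≃o T lam := Ordinal.ToType.mk (o := lam.ord)
  let iF : ∀ n, Set.Iio (ν n) ≃o (lamn n).ord.ToType := fun n => Ordinal.ToType.mk (o := ν n)
  let E : (Σ n : ℕ, (lamn n).ord.ToType) ≃ T lam :=
    (Equiv.sigmaCongrRight fun n => (iF n).toEquiv.symm).trans
      ((Equiv.ofBijective g ⟨hg_inj, hg_surj⟩).trans iL.toEquiv)
  have hE_eq : ∀ p : (Σ n : ℕ, (lamn n).ord.ToType),
      E p = iL (g ⟨p.1, (iF p.1).symm p.2⟩) := fun p => rfl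
  -- each block is bounded
  let bnd : ℕ → T lam := fun n => iL ⟨o (n + 1), holt (n + 1)⟩
  have hEblock : ∀ (n : ℕ) (t : (lamn n).ord.ToType), E ⟨n, t⟩ < bnd n := by
    intro n t
    rw [hE_eq]
    exact iL.lt_iff_lt.2 (hg_lt ⟨n, (iF n).symm t⟩)
  -- every initial segment meets only finitely many blocks
  have hfin : ∀ b : T lam, ∃ N : ℕ, ∀ a : T lam, a < b → (E.symm a).1 < N := by
    intro b
    obtain ⟨N, hN⟩ := hcov (iL.symm b).1 (iL.symm b).2
    refine ⟨N, fun a ha => ?_⟩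
    by_contra hge
    have hNle : N ≤ (E.symm a).1 := le_of_not_gt hge
    have ha' : iL.symm a < iL.symm b := iL.symm.lt_iff_lt.2 ha
    have haval : (iL.symm a : Ordinal) = (g ⟨(E.symm a).1, (iF (E.symm a).1).symm (E.symm a).2⟩).1 := by
      conv_lhs => rw [← E.apply_symm_apply a, hE_eq]
      rw [iL.symm_apply_apply]
    have h1 : o N ≤ o (E.symm a).1 := homono hNle
    have h2 : o (E.symm a).1 ≤ (iL.symm a : Ordinal) := by
      rw [haval]; exact hg_le _
    have h3 : (iL.symm a : Ordinal) < (iL.symm b : Ordinal) := ha'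
    exact absurd ((h1.trans h2).trans_lt (h3.trans hN)) (lt_irrefl _)
  -- the equivalence of function spaces
  let Φ : (T lam → Bool) ≃ (∀ n : ℕ, (lamn n).ord.ToType → Bool) :=
  { toFun := fun x n t => x (E ⟨n, t⟩)
    invFun := fun f a => f (E.symm a).1 (E.symm a).2
    left_inv := fun x => funext fun a => by
      simp only [Sigma.eta, Equiv.apply_symm_apply]
    right_inv := fun f => funext fun n => funext fun t =>
      congrArg (fun p : (Σ n : ℕ, (lamn n).ord.ToType) => f p.1 p.2)
        (E.symm_apply_apply ⟨n, t⟩) }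
  -- topologies
  letI tfac : ∀ n : ℕ, TopologicalSpace ((lamn n).ord.ToType → Bool) := fun _ => ⊥
  haveI hdisc : ∀ n : ℕ, DiscreteTopology ((lamn n).ord.ToType → Bool) := fun _ => ⟨rfl⟩
  letI tb : TopologicalSpace (T lam → Bool) := btop lam
  -- key openness lemma for the bounded topology
  have key : ∀ {I : Type u} (f : I → T lam) (b : T lam), (∀ i, f i < b) → ∀ s : I → Bool,
      IsOpen {x : T lam → Bool | ∀ i, x (f i) = s i} := by
    intro I f b hb s
    have hU : {x : T lam → Bool | ∀ i, x (f i) = s i} =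
        ⋃ y ∈ {x : T lam → Bool | ∀ i, x (f i) = s i},
          {x : T lam → Bool | ∀ a : T lam, a < b → x a = y a} := by
      ext x
      simp only [Set.mem_setOf_eq, Set.mem_iUnion]
      constructor
      · exact fun hx => ⟨x, hx, fun a _ => rfl⟩
      · rintro ⟨y, hy, hxy⟩ i
        rw [hxy _ (hb i)]
        exact hy i
    rw [hU]
    exact isOpen_biUnion fun y _ => TopologicalSpace.GenerateOpen.basic _ ⟨b, y, rfl⟩
  -- continuity of Φ
  have hcont : Continuous Φ := by
    refine continuous_pi fun n => ?_
    rw [continuous_discrete_rng]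
    intro s
    have hpre : ((fun x : T lam → Bool => fun t => x (E ⟨n, t⟩)) ⁻¹' {s}) =
        {x : T lam → Bool | ∀ t : (lamn n).ord.ToType, x (E ⟨n, t⟩) = s t} := by
      ext x
      simp [funext_iff]
    rw [show (fun x : T lam → Bool => Φ x n) = fun x => fun t => x (E ⟨n, t⟩) from rfl, hpre]
    exact key (fun t => E ⟨n, t⟩) (bnd n) (hEblock n) s
  -- continuity of Φ.symm
  have hcontinv : Continuous Φ.symm := by
    have : @Continuous _ _ _ (TopologicalSpace.generateFrom
        {V | ∃ (b : T lam) (s : T lam → Bool), V = {x | ∀ a : T lam, a < b → x a = s a}})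
        Φ.symm := by
      rw [continuous_generateFrom_iff]
      rintro V ⟨b, s, rfl⟩
      obtain ⟨N, hN⟩ := hfin b
      have hP : (Φ.symm ⁻¹' {x : T lam → Bool | ∀ a : T lam, a < b → x a = s a}) =
          ⋃ f ∈ (Φ.symm ⁻¹' {x : T lam → Bool | ∀ a : T lam, a < b → x a = s a}),
            ⋂ n ∈ Finset.range N, {g' : ∀ n : ℕ, (lamn n).ord.ToType → Bool | g' n = f n} := by
        ext f
        simp only [Set.mem_preimage, Set.mem_setOf_eq, Set.mem_iUnion, Set.mem_iInter]
        constructor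
        · exact fun hf => ⟨f, hf, fun n _ => rfl⟩
        · rintro ⟨f', hf', hff'⟩ a ha
          have h1 : (E.symm a).1 < N := hN a ha
          have h2 : f (E.symm a).1 = f' (E.symm a).1 := hff' _ (Finset.mem_range.2 h1)
          show f (E.symm a).1 (E.symm a).2 = s a
          rw [h2]
          exact hf' a ha
      rw [hP]
      refine isOpen_biUnion fun f _ => isOpen_biInter_finset fun n _ => ?_
      have : {g' : ∀ n : ℕ, (lamn n).ord.ToType → Bool | g' n = f n} =
          (fun g' : ∀ n : ℕ, (lamn n).ord.ToType → Bool => g' n) ⁻¹' {f n} := rfl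
      rw [this]
      exact (continuous_apply n).isOpen_preimage _ (isOpen_discrete _)
    exact this
  let h : @Homeomorph (T lam → Bool) (∀ n : ℕ, (lamn n).ord.ToType → Bool)
      (btop lam) (@Pi.topologicalSpace ℕ _ (fun _ => ⊥)) :=
    { Φ with continuous_toFun := hcont, continuous_invFun := hcontinv }
  -- metrizability
  letI mPi : MetricSpace (∀ n : ℕ, (lamn n).ord.ToType → Bool) :=
    @PiNat.metricSpace (fun n : ℕ => (lamn n).ord.ToType → Bool) tfac hdisc
  haveI hcompPi : @CompleteSpace _ mPi.toUniformSpace :=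
    @PiNat.completeSpace (fun n : ℕ => (lamn n).ord.ToType → Bool) tfac hdisc
  have huc : (mPi.induced Φ Φ.injective).toUniformSpace.toTopologicalSpace
      = TopologicalSpace.induced Φ mPi.toUniformSpace.toTopologicalSpace :=
    UniformSpace.toTopologicalSpace_comap
  have hmt : TopologicalSpace.induced Φ mPi.toUniformSpace.toTopologicalSpace
      = TopologicalSpace.induced Φ (@Pi.topologicalSpace ℕ
          (fun n : ℕ => (lamn n).ord.ToType → Bool) tfac) := rfl
  have hind : TopologicalSpace.induced Φ (@Pi.topologicalSpace ℕ
      (fun n : ℕ => (lamn n).ord.ToType → Bool) tfac) = btop lam := h.induced_eq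
  letI mInd : MetricSpace (T lam → Bool) := mPi.induced Φ Φ.injective
  have hui : @IsUniformInducing _ _ mInd.toUniformSpace mPi.toUniformSpace Φ :=
    @IsUniformInducing.mk _ _ mInd.toUniformSpace mPi.toUniformSpace Φ rfl
  have hfinal1 : mInd.toUniformSpace.toTopologicalSpace = btop lam :=
    (huc.trans hmt).trans hind
  have hfinal2 : @CompleteSpace _ mInd.toUniformSpace :=
    (@IsUniformInducing.completeSpace_congr _ _ mInd.toUniformSpace mPi.toUniformSpace (⇑Φ) hui (Equiv.surjective Φ)).2 hcompPi
  exact ⟨⟨h⟩, mInd, hfinal1, hfinal2⟩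
end
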